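/- For every dimension d ≥ 1 and every Lebesgue cover {C_n}_{n∈[N]} of [0,1]^d, there exists a point p ∈ [0,1]^d belonging to at least d+1 of the sets in the cover, i.e. |{n ∈ [N] : p ∈ C_n}| ≥ d + 1. -/
import Mathlib

open Finset Function

namespace LC


/-- Parity lemma: a finset admitting a fixed-point-free involution has even cardinality. -/
lemma even_card_invol {α : Type*} [DecidableEq α] (f : α → α) :
    ∀ (s : Finset α), (∀ a ∈ s, f a ∈ s) → (∀ a ∈ s, f (f a) = a) → (∀ a ∈ s, f a ≠ a) →
    Even s.card := by
  intro s
  induction s using Finset.strongInduction with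
  | _ s ih =>
    intro hmem hinv hne
    rcases s.eq_empty_or_nonempty with rfl | ⟨a, ha⟩
    · simp
    · have hfa : f a ∈ s := hmem a ha
      have hfane : f a ≠ a := hne a ha
      set t := (s.erase a).erase (f a) with ht
      have hsub : t ⊆ s := (erase_subset _ _).trans (erase_subset _ _)
      have htss : t ⊂ s := lt_of_le_of_lt (erase_subset _ _ : t ⊆ s.erase a) (erase_ssubset ha)
      have hmemt : ∀ b, b ∈ t ↔ b ∈ s ∧ b ≠ a ∧ b ≠ f a := by
        intro b; simp [ht, and_comm, and_assoc]; tauto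
      have h1 : ∀ b ∈ t, f b ∈ t := by
        intro b hb
        rcases (hmemt b).1 hb with ⟨hbs, hba, hbfa⟩
        refine (hmemt (f b)).2 ⟨hmem b hbs, ?_, ?_⟩
        · intro h
          have : f a = b := by rw [← h, hinv b hbs]
          exact hbfa this.symm
        · intro h
          have : b = a := by rw [← hinv b hbs, h, hinv a ha]
          exact hba this
      have h2 : ∀ b ∈ t, f (f b) = b := fun b hb => hinv b ((hmemt b).1 hb).1
      have h3 : ∀ b ∈ t, f b ≠ b := fun b hb => hne b ((hmemt b).1 hb).1
      have hcard : s.card = t.card + 2 := by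
        have h1' : (s.erase a).card = s.card - 1 := card_erase_of_mem ha
        have hfa' : f a ∈ s.erase a := mem_erase.2 ⟨hfane, hfa⟩
        have h2' : t.card = (s.erase a).card - 1 := card_erase_of_mem hfa'
        have hpos : 0 < s.card := card_pos.2 ⟨a, ha⟩
        have hpos2 : 1 < s.card := by
          have : (s.erase a).card ≠ 0 := card_ne_zero_of_mem hfa'
          omega
        omega
      rw [hcard]
      rcases ih t htss h1 h2 h3 with ⟨c, hc⟩
      exact ⟨c + 1, by omega⟩



/-- The target label set `{0, …, d-1}`: all labels except the last. -/
def T (d : ℕ) : Finset (Fin (d + 1)) := univ.erase (Fin.last d)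

lemma mem_T {d : ℕ} {t : Fin (d+1)} : t ∈ T d ↔ t ≠ Fin.last d := by
  simp [T]

lemma card_T (d : ℕ) : (T d).card = d := by
  simp [T, card_erase_of_mem]

/-- Door-counting: for a map `ℓ : Fin (d+1) → Fin (d+1)`, the number of `k` such that the
image of the complement of `k` is exactly `T d` is odd iff `ℓ` is surjective. -/
lemma doors_card {d : ℕ} (ℓ : Fin (d+1) → Fin (d+1)) :
    (univ.filter fun k => (univ.erase k).image ℓ = T d).card % 2
      = (if image ℓ univ = univ then 1 else 0) % 2 := by
  by_cases hsurj : image ℓ univ = univ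
  · rw [if_pos hsurj]
    have hs : Surjective ℓ := by
      intro t
      have ht : t ∈ image ℓ univ := by rw [hsurj]; exact mem_univ t
      rcases mem_image.1 ht with ⟨k, _, hk⟩
      exact ⟨k, hk⟩
    have hinj : Injective ℓ := (Finite.injective_iff_surjective).2 hs
    obtain ⟨k₀, hk₀⟩ := hs (Fin.last d)
    have : (univ.filter fun k => (univ.erase k).image ℓ = T d) = {k₀} := by
      ext k
      simp only [mem_filter, mem_univ, true_and, mem_singleton]
      constructor
      · intro hdoor
        by_contra hne
        have : Fin.last d ∈ (univ.erase k).image ℓ :=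
          mem_image.2 ⟨k₀, mem_erase.2 ⟨fun h => hne h.symm, mem_univ _⟩, hk₀⟩
        rw [hdoor] at this
        exact (mem_T.1 this) rfl
      · rintro rfl
        ext t
        simp only [mem_image, mem_erase, mem_univ, and_true, mem_T]
        constructor
        · rintro ⟨j, hj, rfl⟩
          intro h
          exact hj (hinj (h.trans hk₀.symm))
        · intro ht
          obtain ⟨j, hj⟩ := hs t
          refine ⟨j, ?_, hj⟩
          rintro rfl
          exact ht (hj ▸ hk₀ ▸ rfl)
    rw [this]; simp
  · rw [if_neg hsurj]
    have : Even (univ.filter fun k => (univ.erase k).image ℓ = T d).card := by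
      by_cases hT : ∀ t ∈ T d, t ∈ image ℓ univ
      · -- the image is exactly `T d`; exactly two doors
        have hlast : ∀ k, ℓ k ≠ Fin.last d := by
          intro k hk
          apply hsurj
          apply Finset.eq_univ_iff_forall.2
          intro t
          by_cases ht : t = Fin.last d
          · exact ht ▸ (hk ▸ mem_image_of_mem ℓ (mem_univ k))
          · exact hT t (mem_T.2 ht)
        have hmaps : ∀ k : Fin (d+1), k ∈ univ → ℓ k ∈ T d :=
          fun k _ => mem_T.2 (hlast k)
        have hcard : (T d).card < (univ : Finset (Fin (d+1))).card := by
          rw [card_T, card_univ, Fintype.card_fin]; omega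
        obtain ⟨k₁, _, k₂, _, hne, heq⟩ :=
          exists_ne_map_eq_of_card_lt_of_maps_to hcard hmaps
        -- both k₁ and k₂ are doors
        have hdoor : ∀ a b : Fin (d+1), a ≠ b → ℓ a = ℓ b →
            (univ.erase a).image ℓ = T d := by
          intro a b hab hℓab
          apply subset_antisymm
          · intro t ht
            rcases mem_image.1 ht with ⟨j, _, rfl⟩
            exact mem_T.2 (hlast j)
          · intro t ht
            rcases mem_image.1 (hT t ht) with ⟨j, _, rfl⟩
            by_cases hj : j = a
            · exact mem_image.2 ⟨b, mem_erase.2 ⟨fun h => hab h.symm, mem_univ _⟩,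
                by rw [← hℓab, hj]⟩
            · exact mem_image.2 ⟨j, mem_erase.2 ⟨hj, mem_univ _⟩, rfl⟩
        have hd1 := hdoor k₁ k₂ hne heq
        have hd2 := hdoor k₂ k₁ hne.symm heq.symm
        have hinj1 : Set.InjOn ℓ (univ.erase k₁) := by
          apply injOn_of_card_image_eq
          rw [hd1, card_T, card_erase_of_mem (mem_univ _), card_univ, Fintype.card_fin]
          omega
        have : (univ.filter fun k => (univ.erase k).image ℓ = T d) = {k₁, k₂} := by
          ext k
          simp only [mem_filter, mem_univ, true_and, mem_insert, mem_singleton]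
          constructor
          · intro hdoorK
            by_contra hk
            push_neg at hk
            obtain ⟨hk1, hk2⟩ := hk
            have hℓk : ℓ k ∈ T d := mem_T.2 (hlast k)
            rw [← hdoorK] at hℓk
            rcases mem_image.1 hℓk with ⟨k', hk', hℓ⟩
            have hk'k : k' ≠ k := (mem_erase.1 hk').1
            by_cases h1 : k' = k₁
            · rw [h1] at hℓ
              have e1 : ℓ k = ℓ k₂ := by rw [← hℓ, heq]
              have hkm : k ∈ (univ.erase k₁) := mem_erase.2 ⟨hk1, mem_univ _⟩
              have hk2' : k = k₂ := hinj1 hkm (mem_erase.2 ⟨hne.symm, mem_univ _⟩) e1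
              exact hk2 hk2'
            · have hk'm : k' ∈ (univ.erase k₁) := mem_erase.2 ⟨h1, mem_univ _⟩
              have hkm : k ∈ (univ.erase k₁) := mem_erase.2 ⟨hk1, mem_univ _⟩
              exact hk'k (hinj1 hk'm hkm hℓ)
          · intro h
            rcases h with rfl | rfl
            · exact hd1
            · exact hd2
        rw [this, card_pair hne]
        exact ⟨1, rfl⟩
      · push_neg at hT
        obtain ⟨t, htT, htim⟩ := hT
        have : (univ.filter fun k => (univ.erase k).image ℓ = T d) = ∅ := by
          ext k
          simp only [mem_filter, mem_univ, true_and, notMem_empty, iff_false]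
          intro hdoorK
          apply htim
          rw [← hdoorK] at htT
          rcases mem_image.1 htT with ⟨j, hj, hℓ⟩
          exact mem_image.2 ⟨j, mem_univ _, hℓ⟩
        rw [this]; simp
    rcases this with ⟨c, hc⟩
    omega



variable {e m d : ℕ}

/-- Vertex `k` of the Kuhn simplex determined by cell `x` and permutation `π`. -/
def vert (x : Fin d → Fin m) (π : Equiv.Perm (Fin d)) (k : Fin (d+1)) (i : Fin d) : ℕ :=
  (x i : ℕ) + if ((π.symm i : ℕ) < (k : ℕ)) then 1 else 0

lemma vert_le (x : Fin d → Fin m) (π : Equiv.Perm (Fin d)) (k : Fin (d+1)) (i : Fin d) :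
    vert x π k i ≤ m := by
  unfold vert
  have := (x i).isLt
  split <;> omega

lemma perm_mul_symm (π σ : Equiv.Perm (Fin d)) (i : Fin d) :
    (π * σ).symm i = σ.symm (π.symm i) := by
  have : (π * σ).symm i = ((π * σ)⁻¹ : Equiv.Perm (Fin d)) i := rfl
  rw [this, mul_inv_rev, Equiv.Perm.mul_apply]
  rfl

def pushx (x : Fin d → Fin m) (c : Fin d) : Fin d → Fin m :=
  Function.update x c (if h : (x c : ℕ) + 1 < m then ⟨(x c : ℕ) + 1, h⟩ else x c)

def pullx (x : Fin d → Fin m) (c : Fin d) : Fin d → Fin m :=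
  Function.update x c ⟨(x c : ℕ) - 1, lt_of_le_of_lt (Nat.sub_le _ _) (x c).isLt⟩

lemma pushx_apply_ne (x : Fin d → Fin m) (c i : Fin d) (h : i ≠ c) : pushx x c i = x i :=
  Function.update_of_ne h _ _

lemma pushx_apply_eq (x : Fin d → Fin m) (c : Fin d) (h : (x c : ℕ) + 1 < m) :
    (pushx x c c : ℕ) = (x c : ℕ) + 1 := by
  unfold pushx
  rw [Function.update_self, dif_pos h]

lemma pullx_apply_ne (x : Fin d → Fin m) (c i : Fin d) (h : i ≠ c) : pullx x c i = x i :=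
  Function.update_of_ne h _ _

lemma pullx_apply_eq (x : Fin d → Fin m) (c : Fin d) :
    (pullx x c c : ℕ) = (x c : ℕ) - 1 := by
  unfold pullx
  rw [Function.update_self]

lemma val_ne_of_ne {n : ℕ} {a b : Fin n} (h : a ≠ b) : (a : ℕ) ≠ (b : ℕ) :=
  fun hh => h (Fin.ext hh)

/-- Middle-index pivot: swapping two adjacent positions of `π` keeps all vertices except `v k`. -/
lemma vert_swap (x : Fin (e+1) → Fin m) (π : Equiv.Perm (Fin (e+1))) {k j : Fin (e+2)}
    (a b : Fin (e+1)) (ha : (a:ℕ) = (k:ℕ) - 1) (hb : (b:ℕ) = (k:ℕ))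
    (hk0 : k ≠ 0) (hj : j ≠ k) :
    vert x (π * Equiv.swap a b) j = vert x π j := by
  funext i
  unfold vert
  rw [perm_mul_symm]
  rw [Equiv.symm_swap]
  set t := π.symm i with htdef
  have hjk : (j:ℕ) ≠ (k:ℕ) := val_ne_of_ne hj
  have hk0' : (k:ℕ) ≠ 0 := by
    intro h; exact hk0 (Fin.ext h)
  congr 1
  rcases eq_or_ne t a with rfl | hta
  · rw [Equiv.swap_apply_left]
    have : ((b:ℕ) < (j:ℕ)) ↔ ((t:ℕ) < (j:ℕ)) := by omega
    simp only [this]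
  · rcases eq_or_ne t b with rfl | htb
    · rw [Equiv.swap_apply_right]
      have : ((a:ℕ) < (j:ℕ)) ↔ ((t:ℕ) < (j:ℕ)) := by omega
      simp only [this]
    · rw [Equiv.swap_apply_of_ne_of_ne hta htb]

lemma cyc_symm_apply (t : Fin (e+1)) : (finRotate (e+1)).symm t = t - 1 := by
  rw [Equiv.symm_apply_eq, finRotate_succ_apply, sub_add_cancel]

lemma cyc_inv_symm_apply (t : Fin (e+1)) : ((finRotate (e+1))⁻¹ : Equiv.Perm (Fin (e+1))).symm t = t + 1 := by
  have : ((finRotate (e+1))⁻¹ : Equiv.Perm (Fin (e+1))).symm = finRotate (e+1) := rfl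
  rw [this, finRotate_succ_apply]

/-- Rotation pivot at `k = 0`. -/
lemma vert_rot (x : Fin (e+1) → Fin m) (π : Equiv.Perm (Fin (e+1)))
    (h : (x (π 0) : ℕ) + 1 < m) {j : Fin (e+2)} (hj : j ≠ Fin.last (e+1)) :
    vert (pushx x (π 0)) (π * finRotate (e+1)) j = vert x π (j + 1) := by
  funext i
  unfold vert
  rw [perm_mul_symm, cyc_symm_apply]
  set t := π.symm i with htdef
  have hiπ : i = π 0 ↔ t = 0 := by
    rw [htdef, Equiv.symm_apply_eq]
  have hjval : (j : ℕ) < e + 1 := Fin.val_lt_last hj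
  have hj1 : ((j + 1 : Fin (e+2)) : ℕ) = (j : ℕ) + 1 := by
    rw [Fin.val_add_one, if_neg hj]
  rcases eq_or_ne t 0 with ht0 | ht0
  · have hi : i = π 0 := hiπ.2 ht0
    have hsub : ((t - 1 : Fin (e+1)) : ℕ) = e := by
      rw [Fin.coe_sub_one, if_pos ht0]
    have htv : (t : ℕ) = 0 := by rw [ht0]; rfl
    rw [hi, pushx_apply_eq x (π 0) h, hsub, hj1, htv]
    rw [if_neg (by omega), if_pos (by omega)]
  · have hi : i ≠ π 0 := fun hh => ht0 (hiπ.1 hh)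
    rw [pushx_apply_ne x (π 0) i hi]
    have htval : (t : ℕ) ≠ 0 := fun hh => ht0 (Fin.ext hh)
    have hsub : ((t - 1 : Fin (e+1)) : ℕ) = (t : ℕ) - 1 := by
      rw [Fin.coe_sub_one, if_neg ht0]
    rw [hsub, hj1]
    congr 1
    have : ((t:ℕ) - 1 < (j:ℕ)) ↔ ((t:ℕ) < (j:ℕ) + 1) := by omega
    simp only [this]

/-- Rotation pivot at `k = last`. -/
lemma vert_rot' (x : Fin (e+1) → Fin m) (π : Equiv.Perm (Fin (e+1)))
    (hx : 0 < (x (π (Fin.last e)) : ℕ)) {j : Fin (e+2)} (hj : j ≠ 0) :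
    vert (pullx x (π (Fin.last e))) (π * (finRotate (e+1))⁻¹) j = vert x π (j - 1) := by
  funext i
  unfold vert
  rw [perm_mul_symm, cyc_inv_symm_apply]
  set t := π.symm i with htdef
  have hiπ : i = π (Fin.last e) ↔ t = Fin.last e := by
    rw [htdef, Equiv.symm_apply_eq]
  have hjval : (j : ℕ) ≠ 0 := by
    intro hh; exact hj (Fin.ext hh)
  have hj1 : ((j - 1 : Fin (e+2)) : ℕ) = (j : ℕ) - 1 := by
    rw [Fin.coe_sub_one, if_neg hj]
  rcases eq_or_ne t (Fin.last e) with htl | htl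
  · have hi : i = π (Fin.last e) := hiπ.2 htl
    have hadd : ((t + 1 : Fin (e+1)) : ℕ) = 0 := by
      rw [htl, Fin.last_add_one]; rfl
    have htv : (t : ℕ) = e := by rw [htl]; rfl
    have hjlt := j.isLt
    rw [hi, pullx_apply_eq x (π (Fin.last e)), hadd, hj1, htv]
    rw [if_pos (by omega), if_neg (by omega)]
    omega
  · have hi : i ≠ π (Fin.last e) := fun hh => htl (hiπ.1 hh)
    rw [pullx_apply_ne x (π (Fin.last e)) i hi]
    have htval : (t : ℕ) ≠ e := fun hh => htl (Fin.ext hh)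
    have hadd : ((t + 1 : Fin (e+1)) : ℕ) = (t : ℕ) + 1 := by
      rw [Fin.val_add_one, if_neg htl]
    rw [hadd, hj1]
    congr 1
    have htlt := t.isLt
    have : ((t:ℕ) + 1 < (j:ℕ)) ↔ ((t:ℕ) < (j:ℕ) - 1) := by omega
    simp only [this]



/-- Extend a permutation of `Fin e` to `Fin (e+1)` fixing the last element. -/
def extPerm (τ : Equiv.Perm (Fin e)) : Equiv.Perm (Fin (e+1)) where
  toFun i := Fin.lastCases (Fin.last e) (fun j => (τ j).castSucc) i
  invFun i := Fin.lastCases (Fin.last e) (fun j => (τ.symm j).castSucc) i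
  left_inv i := by
    induction i using Fin.lastCases with
    | last => simp
    | cast j => simp
  right_inv i := by
    induction i using Fin.lastCases with
    | last => simp
    | cast j => simp

@[simp] lemma extPerm_last (τ : Equiv.Perm (Fin e)) : extPerm τ (Fin.last e) = Fin.last e := by
  simp [extPerm]

@[simp] lemma extPerm_castSucc (τ : Equiv.Perm (Fin e)) (j : Fin e) :
    extPerm τ j.castSucc = (τ j).castSucc := by
  simp [extPerm]

lemma extPerm_symm_apply (τ : Equiv.Perm (Fin e)) (i : Fin (e+1)) :
    (extPerm τ).symm i = Fin.lastCases (Fin.last e) (fun j => (τ.symm j).castSucc) i := rfl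

@[simp] lemma extPerm_symm_last (τ : Equiv.Perm (Fin e)) :
    (extPerm τ).symm (Fin.last e) = Fin.last e := by
  rw [extPerm_symm_apply]; simp

@[simp] lemma extPerm_symm_castSucc (τ : Equiv.Perm (Fin e)) (j : Fin e) :
    (extPerm τ).symm j.castSucc = (τ.symm j).castSucc := by
  rw [extPerm_symm_apply]; simp

lemma extPerm_injective : Function.Injective (extPerm (e := e)) := by
  intro τ₁ τ₂ h
  ext j
  have := congrArg (fun σ : Equiv.Perm (Fin (e+1)) => σ j.castSucc) h
  simp only [extPerm_castSucc] at this
  exact congrArg Fin.val (Fin.castSucc_injective _ this)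

/-- Restrict a permutation of `Fin (e+1)` fixing the last element to `Fin e`. -/
def resPerm (π : Equiv.Perm (Fin (e+1))) (h : π (Fin.last e) = Fin.last e) : Equiv.Perm (Fin e) where
  toFun j := (π j.castSucc).castPred
    (fun hh => absurd (π.injective (hh.trans h.symm)) (Fin.castSucc_lt_last j).ne)
  invFun j := (π.symm j.castSucc).castPred
    (fun hh => by
      have : j.castSucc = Fin.last e := by
        rw [← h, ← hh, Equiv.apply_symm_apply]
      exact absurd this (Fin.castSucc_lt_last j).ne)
  left_inv j := by
    apply Fin.castSucc_injective
    rw [Fin.castSucc_castPred, Fin.castSucc_castPred, Equiv.symm_apply_apply]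
  right_inv j := by
    apply Fin.castSucc_injective
    rw [Fin.castSucc_castPred, Fin.castSucc_castPred, Equiv.apply_symm_apply]

lemma extPerm_resPerm (π : Equiv.Perm (Fin (e+1))) (h : π (Fin.last e) = Fin.last e) :
    extPerm (resPerm π h) = π := by
  apply Equiv.ext
  intro i
  induction i using Fin.lastCases with
  | last => rw [extPerm_last, h]
  | cast j =>
    rw [extPerm_castSucc]
    show ((resPerm π h) j).castSucc = π j.castSucc
    rw [resPerm]
    simp [Fin.castSucc_castPred]

/-- Vertices of extended simplices are `snoc`s of vertices of the small simplices. -/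
lemma vert_snoc (mpos : 0 < m) (y : Fin e → Fin m) (τ : Equiv.Perm (Fin e)) (k : Fin (e+1)) :
    vert (Fin.snoc y (⟨0, mpos⟩ : Fin m)) (extPerm τ) k.castSucc
      = Fin.snoc (vert y τ k) 0 := by
  funext i
  induction i using Fin.lastCases with
  | last =>
    rw [Fin.snoc_last]
    unfold vert
    rw [Fin.snoc_last, extPerm_symm_last]
    have hcond : ¬ ((Fin.last e : ℕ) < ((k.castSucc : Fin (e+2)) : ℕ)) := by
      rw [Fin.coe_castSucc, Fin.val_last]
      have := k.isLt; omega
    rw [if_neg hcond]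
  | cast j =>
    rw [Fin.snoc_castSucc]
    unfold vert
    rw [Fin.snoc_castSucc, extPerm_symm_castSucc, Fin.coe_castSucc, Fin.coe_castSucc]

lemma erase_last_eq_image_castSucc (n : ℕ) :
    (univ : Finset (Fin (n+1))).erase (Fin.last n) = univ.image Fin.castSucc := by
  ext k
  simp only [mem_erase, mem_univ, and_true, mem_image, true_and]
  constructor
  · intro hk
    exact ⟨⟨(k : ℕ), Fin.val_lt_last hk⟩, Fin.ext rfl⟩
  · rintro ⟨j, rfl⟩
    exact (Fin.castSucc_lt_last j).ne

lemma univ_erase_last_image_addone (n : ℕ) :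
    ((univ : Finset (Fin (n+1))).erase (Fin.last n)).image (· + 1) = univ.erase 0 := by
  have hinj : Function.Injective (· + (1 : Fin (n+1))) := fun a b hab => by
    have := congrArg (· - 1) hab
    simpa using this
  rw [Finset.image_erase hinj, Finset.image_univ_of_surjective
    (fun b => ⟨b - 1, sub_add_cancel b 1⟩), Fin.last_add_one]

lemma univ_erase_zero_image_subone (n : ℕ) :
    ((univ : Finset (Fin (n+1))).erase 0).image (· - 1) = univ.erase (Fin.last n) := by
  have hinj : Function.Injective (· - (1 : Fin (n+1))) := fun a b hab => by
    have := congrArg (· + 1) hab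
    simpa using this
  have hzero : (0 : Fin (n+1)) - 1 = Fin.last n := by
    apply Fin.ext
    rw [Fin.coe_sub_one, if_pos rfl, Fin.val_last]
  rw [Finset.image_erase hinj, Finset.image_univ_of_surjective
    (fun b => ⟨b + 1, add_sub_cancel_right b 1⟩), hzero]


-- pivot definition and the main combinatorial theorem

variable {e m : ℕ}

/-- The pivot (involution) on doors. -/
def pivot (t : ((Fin (e+1) → Fin m) × Equiv.Perm (Fin (e+1))) × Fin (e+2)) :
    ((Fin (e+1) → Fin m) × Equiv.Perm (Fin (e+1))) × Fin (e+2) :=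
  if t.2 = 0 then
    ((pushx t.1.1 (t.1.2 0), t.1.2 * finRotate (e+1)), Fin.last (e+1))
  else if h2 : t.2 = Fin.last (e+1) then
    ((pullx t.1.1 (t.1.2 (Fin.last e)), t.1.2 * (finRotate (e+1))⁻¹), 0)
  else
    ((t.1.1, t.1.2 * Equiv.swap ⟨(t.2 : ℕ) - 1, by have := t.2.isLt; omega⟩
        ⟨(t.2 : ℕ), Fin.val_lt_last h2⟩), t.2)

lemma last_ne_zero' : (Fin.last (e+1)) ≠ (0 : Fin (e+2)) := by
  intro h
  have := congrArg Fin.val h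
  rw [Fin.val_last] at this
  simp at this

lemma pivot_zero (x : Fin (e+1) → Fin m) (π : Equiv.Perm (Fin (e+1))) :
    pivot ((x, π), (0 : Fin (e+2)))
      = ((pushx x (π 0), π * finRotate (e+1)), Fin.last (e+1)) := by
  simp [pivot]

lemma pivot_last (x : Fin (e+1) → Fin m) (π : Equiv.Perm (Fin (e+1))) :
    pivot ((x, π), Fin.last (e+1))
      = ((pullx x (π (Fin.last e)), π * (finRotate (e+1))⁻¹), (0 : Fin (e+2))) := by
  simp [pivot, last_ne_zero']

lemma pivot_mid (x : Fin (e+1) → Fin m) (π : Equiv.Perm (Fin (e+1))) (k : Fin (e+2))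
    (hk0 : k ≠ 0) (hkl : k ≠ Fin.last (e+1)) :
    ∃ a b : Fin (e+1), (a : ℕ) = (k : ℕ) - 1 ∧ (b : ℕ) = (k : ℕ) ∧
      pivot ((x, π), k) = ((x, π * Equiv.swap a b), k) := by
  refine ⟨⟨(k : ℕ) - 1, by have := k.isLt; omega⟩, ⟨(k : ℕ), Fin.val_lt_last hkl⟩,
    rfl, rfl, ?_⟩
  simp [pivot, hk0, hkl]

def labdown {e : ℕ} (lab : (Fin (e+1) → ℕ) → Fin (e+2)) (w : Fin e → ℕ) : Fin (e+1) :=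
  ⟨min ((lab (Fin.snoc w 0)) : ℕ) e, by omega⟩

def upmap {e m : ℕ} (mpos : 0 < m) (s' : (Fin e → Fin m) × Equiv.Perm (Fin e)) :
    ((Fin (e+1) → Fin m) × Equiv.Perm (Fin (e+1))) × Fin (e+2) :=
  ((Fin.snoc s'.1 ⟨0, mpos⟩, extPerm s'.2), Fin.last (e+1))

set_option maxHeartbeats 1000000 in
theorem kuhn : ∀ (d m : ℕ) (lab : (Fin d → ℕ) → Fin (d+1)),
    (∀ v : Fin d → ℕ, (∀ i, v i ≤ m) → ∀ i : Fin d, v i = 0 → ((lab v : ℕ) ≤ (i : ℕ))) →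
    (∀ v : Fin d → ℕ, (∀ i, v i ≤ m) → ∀ i : Fin d, v i = m → ((lab v : ℕ) ≠ (i : ℕ))) →
    Odd (univ.filter (fun s : (Fin d → Fin m) × Equiv.Perm (Fin d) =>
      univ.image (fun k => lab (vert s.1 s.2 k)) = univ)).card := by
  intro d
  induction d with
  | zero =>
    intro m lab _ _
    have hall : (univ.filter (fun s : (Fin 0 → Fin m) × Equiv.Perm (Fin 0) =>
        univ.image (fun k => lab (vert s.1 s.2 k)) = univ)) = univ := by
      apply filter_true_of_mem
      intro s _
      apply Finset.eq_univ_iff_forall.2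
      intro t
      have hsub : ∀ a b : Fin (0+1), a = b := fun a b => Fin.ext (by omega)
      exact mem_image.2 ⟨0, mem_univ _, hsub _ _⟩
    rw [hall, card_univ]
    have : Fintype.card ((Fin 0 → Fin m) × Equiv.Perm (Fin 0)) = 1 := by
      simp [Fintype.card_perm]
    rw [this]
    exact odd_one
  | succ e ih =>
    intro m lab h0 hm
    rcases Nat.eq_zero_or_pos m with rfl | mpos
    · exfalso
      have hv : ∀ i : Fin (e+1), (fun _ : Fin (e+1) => 0) i ≤ 0 := fun _ => le_refl 0
      have h1 := h0 _ hv 0 rfl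
      have h2 := hm _ hv 0 rfl
      rw [Fin.val_zero] at h1 h2
      omega
    classical
    set R : Finset ((Fin (e+1) → Fin m) × Equiv.Perm (Fin (e+1))) :=
      univ.filter (fun s => univ.image (fun k => lab (vert s.1 s.2 k)) = univ) with hR
    show Odd R.card
    set Dr : Finset (((Fin (e+1) → Fin m) × Equiv.Perm (Fin (e+1))) × Fin (e+2)) :=
      univ.filter (fun t => (univ.erase t.2).image (fun k => lab (vert t.1.1 t.1.2 k)) = T (e+1))
      with hDr
    have memDr : ∀ t, t ∈ Dr ↔
        (univ.erase t.2).image (fun k => lab (vert t.1.1 t.1.2 k)) = T (e+1) := by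
      intro t; rw [hDr, mem_filter]; simp
    -- Step A : parity of doors equals parity of rainbows
    have stepA : Dr.card % 2 = R.card % 2 := by
      have h1 : Dr.card = ∑ s : (Fin (e+1) → Fin m) × Equiv.Perm (Fin (e+1)),
          (univ.filter (fun k : Fin (e+2) =>
            (univ.erase k).image (fun k' => lab (vert s.1 s.2 k')) = T (e+1))).card := by
        rw [hDr, Finset.card_filter, Fintype.sum_prod_type]
        exact Finset.sum_congr rfl fun s _ => (Finset.card_filter _ _).symm
      have h2 : R.card = ∑ s : (Fin (e+1) → Fin m) × Equiv.Perm (Fin (e+1)),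
          (if univ.image (fun k => lab (vert s.1 s.2 k)) = univ then 1 else 0) := by
        rw [hR]; exact Finset.card_filter _ _
      rw [h1, h2]
      calc (∑ s : (Fin (e+1) → Fin m) × Equiv.Perm (Fin (e+1)),
            (univ.filter (fun k : Fin (e+2) =>
              (univ.erase k).image (fun k' => lab (vert s.1 s.2 k')) = T (e+1))).card) % 2
          = (∑ s : (Fin (e+1) → Fin m) × Equiv.Perm (Fin (e+1)),
            (univ.filter (fun k : Fin (e+2) =>
              (univ.erase k).image (fun k' => lab (vert s.1 s.2 k')) = T (e+1))).card % 2) % 2 :=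
            Finset.sum_nat_mod _ _ _
        _ = (∑ s : (Fin (e+1) → Fin m) × Equiv.Perm (Fin (e+1)),
            (if univ.image (fun k => lab (vert s.1 s.2 k)) = univ then 1 else 0) % 2) % 2 := by
            refine congrArg (· % 2) (Finset.sum_congr rfl fun s _ => ?_)
            exact doors_card (fun k => lab (vert s.1 s.2 k))
        _ = (∑ s : (Fin (e+1) → Fin m) × Equiv.Perm (Fin (e+1)),
            (if univ.image (fun k => lab (vert s.1 s.2 k)) = univ then 1 else 0)) % 2 :=
            (Finset.sum_nat_mod _ _ _).symm
    -- no doors of type A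
    have key0 : ∀ (x : Fin (e+1) → Fin m) (π : Equiv.Perm (Fin (e+1))),
        (((x, π), (0 : Fin (e+2))) ∈ Dr) → ((x (π 0)) : ℕ) + 1 < m := by
      intro x π ht
      by_contra hA
      have hxm : ((x (π 0)) : ℕ) + 1 = m := by have := (x (π 0)).isLt; omega
      have hc' : (Fin.castSucc (π 0) : Fin (e+2)) ∈ T (e+1) := by
        rw [mem_T]
        intro hh
        have hv := congrArg Fin.val hh
        rw [Fin.coe_castSucc, Fin.val_last] at hv
        have := (π 0).isLt
        omega
      rw [memDr] at ht
      rw [← ht] at hc'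
      rcases mem_image.1 hc' with ⟨j, hj, hlabj⟩
      have hj0 : j ≠ 0 := (mem_erase.1 hj).1
      have hj0' : (j : ℕ) ≠ 0 := fun hh => hj0 (Fin.ext hh)
      have hcoord : vert x π j (π 0) = m := by
        unfold vert
        rw [Equiv.symm_apply_apply]
        rw [if_pos (by rw [Fin.val_zero]; omega)]
        omega
      have hne := hm (vert x π j) (fun i => vert_le x π j i) (π 0) hcoord
      exact hne ((congrArg Fin.val hlabj).trans (Fin.coe_castSucc _))
    -- Step B : parity of doors equals parity of boundary doors
    set B : Finset (((Fin (e+1) → Fin m) × Equiv.Perm (Fin (e+1))) × Fin (e+2)) :=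
      Dr.filter (fun t => t.2 = Fin.last (e+1) ∧ ((t.1.1 (t.1.2 (Fin.last e))) : ℕ) = 0) with hB
    have hBsub : B ⊆ Dr := filter_subset _ _
    have hDB : ∀ t, t ∈ Dr \ B ↔ t ∈ Dr ∧
        ¬(t.2 = Fin.last (e+1) ∧ ((t.1.1 (t.1.2 (Fin.last e))) : ℕ) = 0) := by
      intro t
      rw [mem_sdiff]
      constructor
      · rintro ⟨h1, h2⟩
        refine ⟨h1, fun hP => h2 ?_⟩
        rw [hB, mem_filter]
        exact ⟨h1, hP⟩
      · rintro ⟨h1, h2⟩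
        refine ⟨h1, fun hB2 => ?_⟩
        rw [hB, mem_filter] at hB2
        exact h2 hB2.2
    have master : ∀ t ∈ Dr \ B, (pivot t ∈ Dr \ B) ∧ pivot (pivot t) = t ∧ pivot t ≠ t := by
      rintro ⟨⟨x, π⟩, k⟩ ht
      rw [hDB] at ht
      obtain ⟨htD, htB⟩ := ht
      rcases eq_or_ne k 0 with rfl | hk0
      · -- pivot at k = 0
        have hA := key0 x π htD
        have hpt := pivot_zero (m := m) x π
        have hπ' : (π * finRotate (e+1)) (Fin.last e) = π 0 := by
          rw [Equiv.Perm.mul_apply, finRotate_succ_apply, Fin.last_add_one]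
        have hD' : ((pushx x (π 0), π * finRotate (e+1)), Fin.last (e+1)) ∈ Dr := by
          rw [memDr]
          have himg : ∀ j ∈ univ.erase (Fin.last (e+1)),
              lab (vert (pushx x (π 0)) (π * finRotate (e+1)) j) = lab (vert x π (j + 1)) := by
            intro j hj
            rw [vert_rot x π hA (mem_erase.1 hj).1]
          calc (univ.erase (Fin.last (e+1))).image
                (fun k => lab (vert (pushx x (π 0)) (π * finRotate (e+1)) k))
              = (univ.erase (Fin.last (e+1))).image
                ((fun k => lab (vert x π k)) ∘ (· + 1)) := Finset.image_congr himg
            _ = ((univ.erase (Fin.last (e+1))).image (· + 1)).image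
                (fun k => lab (vert x π k)) := (Finset.image_image).symm
            _ = (univ.erase (0 : Fin (e+2))).image (fun k => lab (vert x π k)) := by
                rw [univ_erase_last_image_addone]
            _ = T (e+1) := by rw [memDr] at htD; exact htD
        have hB' : ¬((Fin.last (e+1) : Fin (e+2)) = Fin.last (e+1) ∧
            (((pushx x (π 0)) ((π * finRotate (e+1)) (Fin.last e))) : ℕ) = 0) := by
          rintro ⟨-, hzero⟩
          rw [hπ', pushx_apply_eq x (π 0) hA] at hzero
          omega
        refine ⟨?_, ?_, ?_⟩
        · rw [hpt, hDB]; exact ⟨hD', hB'⟩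
        · rw [hpt, pivot_last, hπ']
          refine Prod.ext (Prod.ext ?_ ?_) rfl
          · show pullx (pushx x (π 0)) (π 0) = x
            funext i
            rcases eq_or_ne i (π 0) with rfl | hi
            · apply Fin.ext
              rw [pullx_apply_eq, pushx_apply_eq x _ hA]
              omega
            · rw [pullx_apply_ne _ _ _ hi, pushx_apply_ne _ _ _ hi]
          · show π * finRotate (e+1) * (finRotate (e+1))⁻¹ = π
            rw [mul_inv_cancel_right]
        · rw [hpt]
          intro hh
          exact last_ne_zero' (congrArg Prod.snd hh)
      rcases eq_or_ne k (Fin.last (e+1)) with rfl | hkl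
      · -- pivot at k = last
        have hx0 : ((x (π (Fin.last e))) : ℕ) ≠ 0 := fun hh => htB ⟨rfl, hh⟩
        have hxpos : 0 < ((x (π (Fin.last e))) : ℕ) := Nat.pos_of_ne_zero hx0
        have hpt := pivot_last (m := m) x π
        have hπ'' : (π * (finRotate (e+1))⁻¹) 0 = π (Fin.last e) := by
          have hc0 : ((finRotate (e+1))⁻¹ : Equiv.Perm (Fin (e+1))) 0 = Fin.last e := by
            have hh : ((finRotate (e+1))⁻¹ : Equiv.Perm (Fin (e+1))) 0
                = (finRotate (e+1)).symm 0 := rfl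
            rw [hh, cyc_symm_apply]
            apply Fin.ext
            rw [Fin.coe_sub_one, if_pos rfl, Fin.val_last]
          rw [Equiv.Perm.mul_apply, hc0]
        have hD' : ((pullx x (π (Fin.last e)), π * (finRotate (e+1))⁻¹), (0:Fin (e+2))) ∈ Dr := by
          rw [memDr]
          have himg : ∀ j ∈ univ.erase (0 : Fin (e+2)),
              lab (vert (pullx x (π (Fin.last e))) (π * (finRotate (e+1))⁻¹) j)
                = lab (vert x π (j - 1)) := by
            intro j hj
            rw [vert_rot' x π hxpos (mem_erase.1 hj).1]
          calc (univ.erase (0 : Fin (e+2))).image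
                (fun k => lab (vert (pullx x (π (Fin.last e))) (π * (finRotate (e+1))⁻¹) k))
              = (univ.erase (0 : Fin (e+2))).image ((fun k => lab (vert x π k)) ∘ (· - 1)) :=
                Finset.image_congr himg
            _ = ((univ.erase (0 : Fin (e+2))).image (· - 1)).image (fun k => lab (vert x π k)) :=
                (Finset.image_image).symm
            _ = (univ.erase (Fin.last (e+1))).image (fun k => lab (vert x π k)) := by
                rw [univ_erase_zero_image_subone]
            _ = T (e+1) := by rw [memDr] at htD; exact htD
        refine ⟨?_, ?_, ?_⟩
        · rw [hpt, hDB]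
          refine ⟨hD', ?_⟩
          rintro ⟨hh, -⟩
          exact last_ne_zero' hh.symm
        · rw [hpt, pivot_zero, hπ'']
          refine Prod.ext (Prod.ext ?_ ?_) rfl
          · show pushx (pullx x (π (Fin.last e))) (π (Fin.last e)) = x
            have hcond : ((pullx x (π (Fin.last e))) (π (Fin.last e)) : ℕ) + 1 < m := by
              rw [pullx_apply_eq]
              have := (x (π (Fin.last e))).isLt
              omega
            funext i
            rcases eq_or_ne i (π (Fin.last e)) with rfl | hi
            · apply Fin.ext
              rw [pushx_apply_eq _ _ hcond, pullx_apply_eq]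
              omega
            · rw [pushx_apply_ne _ _ _ hi, pullx_apply_ne _ _ _ hi]
          · show π * (finRotate (e+1))⁻¹ * finRotate (e+1) = π
            rw [inv_mul_cancel_right]
        · rw [hpt]
          intro hh
          exact last_ne_zero' (congrArg Prod.snd hh).symm
      · -- pivot in the middle
        obtain ⟨a, b, hav, hbv, hpt⟩ := pivot_mid (m := m) x π k hk0 hkl
        have hk0' : (k : ℕ) ≠ 0 := fun hh => hk0 (Fin.ext hh)
        have himg : ∀ j ∈ univ.erase k,
            lab (vert x (π * Equiv.swap a b) j) = lab (vert x π j) := by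
          intro j hj
          rw [vert_swap x π a b hav hbv hk0 (mem_erase.1 hj).1]
        have hD' : ((x, π * Equiv.swap a b), k) ∈ Dr := by
          rw [memDr]
          calc (univ.erase k).image (fun k' => lab (vert x (π * Equiv.swap a b) k'))
              = (univ.erase k).image (fun k' => lab (vert x π k')) := Finset.image_congr himg
            _ = T (e+1) := by rw [memDr] at htD; exact htD
        have hswapne : Equiv.swap a b ≠ 1 := by
          intro hh
          have h3 : Equiv.swap a b a = (1 : Equiv.Perm (Fin (e+1))) a :=
            congrArg (fun σ : Equiv.Perm (Fin (e+1)) => σ a) hh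
          rw [Equiv.swap_apply_left] at h3
          have h4 := congrArg Fin.val h3
          simp only [Equiv.Perm.coe_one, id_eq] at h4
          omega
        refine ⟨?_, ?_, ?_⟩
        · rw [hpt, hDB]
          exact ⟨hD', fun hh => hkl hh.1⟩
        · rw [hpt]
          obtain ⟨a', b', hav', hbv', hpt'⟩ := pivot_mid (m := m) x (π * Equiv.swap a b) k hk0 hkl
          rw [hpt']
          have haa : a' = a := Fin.ext (by omega)
          have hbb : b' = b := Fin.ext (by omega)
          rw [haa, hbb]
          refine Prod.ext (Prod.ext rfl ?_) rfl
          show π * Equiv.swap a b * Equiv.swap a b = π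
          rw [mul_assoc, Equiv.swap_mul_self, mul_one]
        · rw [hpt]
          intro hh
          have h1 : π * Equiv.swap a b = π := congrArg (fun z => z.1.2) hh
          apply hswapne
          exact mul_left_cancel (a := π) (by rw [mul_one]; exact h1)
    have hEven : Even (Dr \ B).card :=
      even_card_invol pivot (Dr \ B) (fun t ht => (master t ht).1)
        (fun t ht => (master t ht).2.1) (fun t ht => (master t ht).2.2)
    have stepB : Dr.card % 2 = B.card % 2 := by
      have hsplit := Finset.card_sdiff_add_card_eq_card hBsub
      rcases hEven with ⟨c, hc⟩
      omega
    -- Step C : boundary doors are rainbows one dimension down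
    have hsnoc_le : ∀ w : Fin e → ℕ, (∀ i, w i ≤ m) → ∀ j, (Fin.snoc w (0:ℕ) : Fin (e+1) → ℕ) j ≤ m := by
      intro w hw j
      induction j using Fin.lastCases with
      | last => rw [Fin.snoc_last]; omega
      | cast j => rw [Fin.snoc_castSucc]; exact hw j
    have h0' : ∀ w : Fin e → ℕ, (∀ i, w i ≤ m) → ∀ i : Fin e, w i = 0 →
        ((labdown lab w : ℕ) ≤ (i:ℕ)) := by
      intro w hw i hi
      have hcast : (Fin.snoc w (0:ℕ) : Fin (e+1) → ℕ) i.castSucc = 0 := by rw [Fin.snoc_castSucc]; exact hi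
      have hh := h0 _ (hsnoc_le w hw) i.castSucc hcast
      rw [Fin.coe_castSucc] at hh
      show min ((lab (Fin.snoc w 0)) : ℕ) e ≤ (i:ℕ)
      omega
    have hm' : ∀ w : Fin e → ℕ, (∀ i, w i ≤ m) → ∀ i : Fin e, w i = m →
        ((labdown lab w : ℕ) ≠ (i:ℕ)) := by
      intro w hw i hi
      have hcast : (Fin.snoc w (0:ℕ) : Fin (e+1) → ℕ) i.castSucc = m := by rw [Fin.snoc_castSucc]; exact hi
      have hh := hm _ (hsnoc_le w hw) i.castSucc hcast
      rw [Fin.coe_castSucc] at hh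
      have hie := i.isLt
      show min ((lab (Fin.snoc w 0)) : ℕ) e ≠ (i:ℕ)
      omega
    have hodd' := ih m (labdown lab) h0' hm'
    have hlabval : ∀ (w : Fin e → ℕ), (∀ i, w i ≤ m) → ((lab (Fin.snoc w 0)) : ℕ) ≤ e := by
      intro w hw
      have hlast : (Fin.snoc w (0:ℕ) : Fin (e+1) → ℕ) (Fin.last e) = 0 := Fin.snoc_last _ _
      have hh := h0 _ (hsnoc_le w hw) (Fin.last e) hlast
      rw [Fin.val_last] at hh
      exact hh
    have corr : ∀ (y : Fin e → Fin m) (τ : Equiv.Perm (Fin e)) (k : Fin (e+1)),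
        lab (vert (Fin.snoc y (⟨0, mpos⟩ : Fin m)) (extPerm τ) k.castSucc)
          = Fin.castSucc (labdown lab (vert y τ k)) := by
      intro y τ k
      rw [vert_snoc mpos]
      apply Fin.ext
      rw [Fin.coe_castSucc]
      show ((lab (Fin.snoc (vert y τ k) 0)) : ℕ) = min ((lab (Fin.snoc (vert y τ k) 0)) : ℕ) e
      have := hlabval (vert y τ k) (fun i => vert_le y τ k i)
      omega
    have doorup : ∀ (y : Fin e → Fin m) (τ : Equiv.Perm (Fin e)),
        ((univ.erase (Fin.last (e+1))).image
          (fun k => lab (vert (Fin.snoc y (⟨0,mpos⟩:Fin m)) (extPerm τ) k)) = T (e+1))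
          ↔ (univ.image (fun k => labdown lab (vert y τ k)) = univ) := by
      intro y τ
      have hchain : (univ.erase (Fin.last (e+1))).image
            (fun k => lab (vert (Fin.snoc y (⟨0,mpos⟩:Fin m)) (extPerm τ) k))
          = (univ.image (fun k => labdown lab (vert y τ k))).image Fin.castSucc := by
        rw [erase_last_eq_image_castSucc, Finset.image_image, Finset.image_image]
        apply Finset.image_congr
        intro k _
        show lab (vert (Fin.snoc y (⟨0,mpos⟩:Fin m)) (extPerm τ) k.castSucc)
          = Fin.castSucc (labdown lab (vert y τ k))
        exact corr y τ k
      rw [hchain]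
      have hT : T (e+1) = (univ : Finset (Fin (e+1))).image Fin.castSucc :=
        erase_last_eq_image_castSucc (e+1)
      rw [hT]
      constructor
      · intro h
        exact Finset.image_injective (Fin.castSucc_injective _) h
      · intro h
        rw [h]
    have hup_inj : Function.Injective (upmap (e := e) mpos) := by
      intro s t h
      have h1 : (Fin.snoc s.1 (⟨0,mpos⟩:Fin m) : Fin (e+1) → Fin m)
          = (Fin.snoc t.1 (⟨0,mpos⟩:Fin m) : Fin (e+1) → Fin m) :=
        congrArg (fun z => z.1.1) h
      have h2 : extPerm s.2 = extPerm t.2 := congrArg (fun z => z.1.2) h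
      have hfst : s.1 = t.1 := by
        funext j
        have := congrArg (fun f : Fin (e+1) → Fin m => f j.castSucc) h1
        simpa using this
      have hsnd : s.2 = t.2 := extPerm_injective h2
      exact Prod.ext hfst hsnd
    have hBeq : B = (univ.filter (fun s' : (Fin e → Fin m) × Equiv.Perm (Fin e) =>
        univ.image (fun k => labdown lab (vert s'.1 s'.2 k)) = univ)).image (upmap mpos) := by
      ext t
      constructor
      · intro ht
        rw [hB, mem_filter] at ht
        obtain ⟨htD, htlast, htx⟩ := ht
        obtain ⟨⟨x, π⟩, k⟩ := t
        have hk : k = Fin.last (e+1) := htlast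
        subst hk
        have htx' : (x (π (Fin.last e)) : ℕ) = 0 := htx
        have hπl : π (Fin.last e) = Fin.last e := by
          have hlabel : ∀ j : Fin (e+2), j ≠ Fin.last (e+1) →
              ((lab (vert x π j)) : ℕ) ≤ ((π (Fin.last e)) : ℕ) := by
            intro j hj
            have hjlt : (j : ℕ) < e + 1 := Fin.val_lt_last hj
            have hcoord : vert x π j (π (Fin.last e)) = 0 := by
              unfold vert
              rw [Equiv.symm_apply_apply]
              rw [if_neg (by rw [Fin.val_last]; omega)]
              omega
            exact h0 (vert x π j) (fun i => vert_le x π j i) (π (Fin.last e)) hcoord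
          have hE : (⟨e, by omega⟩ : Fin (e+2)) ∈ T (e+1) := by
            rw [mem_T]
            intro hh
            have := congrArg Fin.val hh
            rw [Fin.val_last] at this
            simp at this
          rw [memDr] at htD
          rw [← htD] at hE
          rcases mem_image.1 hE with ⟨j, hj, hEj⟩
          have hval : ((lab (vert x π j)) : ℕ) = e := by
            have := congrArg Fin.val hEj
            simpa using this
          have hle := hlabel j (mem_erase.1 hj).1
          have hcv := (π (Fin.last e)).isLt
          apply Fin.ext
          rw [Fin.val_last]
          omega
        have hxl : (x (Fin.last e) : ℕ) = 0 := by rw [← hπl]; exact htx'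
        have hxx : Fin.snoc (x ∘ Fin.castSucc) (⟨0,mpos⟩ : Fin m) = x := by
          funext i
          induction i using Fin.lastCases with
          | last =>
            rw [Fin.snoc_last]
            apply Fin.ext
            rw [hxl]
          | cast j => rw [Fin.snoc_castSucc]; rfl
        refine mem_image.2 ⟨(x ∘ Fin.castSucc, resPerm π hπl), ?_, ?_⟩
        · rw [mem_filter]
          refine ⟨mem_univ _, ?_⟩
          apply (doorup _ _).1
          rw [hxx, extPerm_resPerm]
          rw [memDr] at htD
          exact htD
        · show ((Fin.snoc (x ∘ Fin.castSucc) (⟨0,mpos⟩:Fin m), extPerm (resPerm π hπl)),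
            Fin.last (e+1)) = ((x, π), Fin.last (e+1))
          rw [hxx, extPerm_resPerm]
      · intro htmem
        rcases mem_image.1 htmem with ⟨s', hs', rfl⟩
        rw [mem_filter] at hs'
        have hrain := hs'.2
        rw [hB, mem_filter]
        refine ⟨?_, rfl, ?_⟩
        · rw [memDr]
          exact (doorup s'.1 s'.2).2 hrain
        · show (((Fin.snoc s'.1 (⟨0,mpos⟩:Fin m) : Fin (e+1) → Fin m))
              ((extPerm s'.2) (Fin.last e)) : ℕ) = 0
          rw [extPerm_last, Fin.snoc_last]
    have hBR' : B.card = (univ.filter (fun s' : (Fin e → Fin m) × Equiv.Perm (Fin e) =>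
        univ.image (fun k => labdown lab (vert s'.1 s'.2 k)) = univ)).card := by
      rw [hBeq]
      exact Finset.card_image_of_injective _ hup_inj
    rw [Nat.odd_iff] at hodd' ⊢
    omega



end LC

open Finset Function in
set_option maxHeartbeats 1000000 in
/-- **Lebesgue Covering Theorem.** Given a Lebesgue cover of `[0,1]^d` (a finite family
of closed sets covering the cube, none containing two points of the cube at `ℓ∞` distance `1`),
there is a point of the cube belonging to at least `d + 1` sets of the cover. -/
theorem lebesgue_covering
    (d N : ℕ) (hd : 1 ≤ d) (C : Fin N → Set (Fin d → ℝ))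
    (hclosed : ∀ n, IsClosed (C n))
    (hcover : Set.Icc (0 : Fin d → ℝ) 1 ⊆ ⋃ n, C n)
    (hopp : ∀ n, ∀ x ∈ Set.Icc (0 : Fin d → ℝ) 1, ∀ y ∈ Set.Icc (0 : Fin d → ℝ) 1,
      x ∈ C n → y ∈ C n → dist x y ≠ 1) :
    ∃ p ∈ Set.Icc (0 : Fin d → ℝ) 1,
      (d + 1 : ℕ∞) ≤ {n : Fin N | p ∈ C n}.encard := by
  classical
  have h0cube : (0 : Fin d → ℝ) ∈ Set.Icc (0 : Fin d → ℝ) 1 := by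
    rw [Set.mem_Icc]
    exact ⟨le_refl _, fun i => zero_le_one⟩
  obtain ⟨n0, hn0mem⟩ := Set.mem_iUnion.1 (hcover h0cube)
  -- Main step: at every scale `1/m` there are `d+1` distinct sets almost meeting at a point.
  have main : ∀ m : ℕ, 0 < m → ∃ F : Fin (d+1) → Fin N, Function.Injective F ∧
      ∃ q ∈ Set.Icc (0 : Fin d → ℝ) 1, ∀ k, ∃ z ∈ C (F k), dist q z ≤ 1 / (m : ℝ) := by
    intro m mpos
    have hmR : (0 : ℝ) < m := by exact_mod_cast mpos
    set pt : (Fin d → ℕ) → (Fin d → ℝ) := fun v i => (v i : ℝ) / m with hpt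
    have hptcube : ∀ v : Fin d → ℕ, (∀ i, v i ≤ m) → pt v ∈ Set.Icc (0 : Fin d → ℝ) 1 := by
      intro v hv
      rw [Set.mem_Icc]
      constructor <;> intro i
      · show (0:ℝ) ≤ (v i : ℝ) / m
        positivity
      · show (v i : ℝ) / m ≤ 1
        rw [div_le_one hmR]
        exact_mod_cast hv i
    have hcolor : ∀ v : Fin d → ℕ, (∀ i, v i ≤ m) → ∃ n, pt v ∈ C n := by
      intro v hv; exact Set.mem_iUnion.1 (hcover (hptcube v hv))
    set color : (Fin d → ℕ) → Fin N := fun v =>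
      if h : ∀ i, v i ≤ m then (hcolor v h).choose else n0 with hcolordef
    have hcolormem : ∀ v, (∀ i, v i ≤ m) → pt v ∈ C (color v) := by
      intro v hv
      rw [hcolordef]; dsimp only; rw [dif_pos hv]
      exact (hcolor v hv).choose_spec
    have hdist1 : ∀ (v w : Fin d → ℕ), (∀ i, v i ≤ m) → (∀ i, w i ≤ m) →
        color v = color w → ∀ i : Fin d, v i = m → w i = 0 → False := by
      intro v w hv hw hc i hvi hwi
      have hvc := hptcube v hv
      have hwc := hptcube w hw
      have hvc' := Set.mem_Icc.1 hvc
      have hwc' := Set.mem_Icc.1 hwc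
      have hdle : dist (pt v) (pt w) ≤ 1 := by
        rw [dist_pi_le_iff zero_le_one]
        intro j
        rw [Real.dist_eq, abs_le]
        have h1a := hvc'.1 j; have h1b := hvc'.2 j
        have h2a := hwc'.1 j; have h2b := hwc'.2 j
        constructor <;> simp only [Pi.zero_apply, Pi.one_apply] at h1a h1b h2a h2b <;> linarith
      have hdge : (1:ℝ) ≤ dist (pt v) (pt w) := by
        have hle := dist_le_pi_dist (pt v) (pt w) i
        have hco : dist (pt v i) (pt w i) = 1 := by
          rw [Real.dist_eq]
          show |(v i : ℝ) / m - (w i : ℝ) / m| = 1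
          rw [hvi, hwi]
          push_cast
          rw [zero_div, sub_zero, div_self (ne_of_gt hmR), abs_one]
        linarith
      have heq : dist (pt v) (pt w) = 1 := le_antisymm hdle hdge
      exact hopp (color v) (pt v) hvc (pt w) hwc (hcolormem v hv)
        (hc ▸ hcolormem w hw) heq
    set meets : Fin N → Finset (Fin d) := fun n =>
      univ.filter (fun i => ∃ v : Fin d → ℕ, (∀ j, v j ≤ m) ∧ color v = n ∧ v i = 0)
      with hmeets
    set lab : (Fin d → ℕ) → Fin (d+1) := fun v =>
      if h : (meets (color v)).Nonempty then Fin.castSucc ((meets (color v)).min' h)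
      else Fin.last d with hlab
    have hlab0 : ∀ v : Fin d → ℕ, (∀ i, v i ≤ m) → ∀ i : Fin d, v i = 0 →
        ((lab v : ℕ) ≤ (i:ℕ)) := by
      intro v hv i hvi
      have himem : i ∈ meets (color v) := by
        rw [hmeets]; dsimp only; rw [mem_filter]
        exact ⟨mem_univ _, v, hv, rfl, hvi⟩
      have hne : (meets (color v)).Nonempty := ⟨i, himem⟩
      rw [hlab]; dsimp only; rw [dif_pos hne, Fin.coe_castSucc]
      exact Finset.min'_le _ _ himem
    have hlabm : ∀ v : Fin d → ℕ, (∀ i, v i ≤ m) → ∀ i : Fin d, v i = m →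
        ((lab v : ℕ) ≠ (i:ℕ)) := by
      intro v hv i hvi
      rw [hlab]; dsimp only
      by_cases hne : (meets (color v)).Nonempty
      · rw [dif_pos hne, Fin.coe_castSucc]
        intro heq
        have hmin := Finset.min'_mem (meets (color v)) hne
        have hmin2 : (meets (color v)).min' hne ∈ univ.filter
            (fun i : Fin d => ∃ v' : Fin d → ℕ, (∀ j, v' j ≤ m) ∧ color v' = color v ∧ v' i = 0) :=
          hmin
        rw [mem_filter] at hmin2
        obtain ⟨-, w, hw, hcw, hwi⟩ := hmin2
        have hii : (meets (color v)).min' hne = i := Fin.ext heq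
        rw [hii] at hwi
        exact hdist1 v w hv hw hcw.symm i hvi hwi
      · rw [dif_neg hne, Fin.val_last]
        have := i.isLt
        omega
    have hodd := LC.kuhn d m lab hlab0 hlabm
    have hnonempty : (univ.filter (fun s : (Fin d → Fin m) × Equiv.Perm (Fin d) =>
        univ.image (fun k => lab (LC.vert s.1 s.2 k)) = univ)).Nonempty := by
      apply Finset.card_pos.1
      rcases hodd with ⟨c, hc⟩
      omega
    obtain ⟨⟨x, π⟩, hmem⟩ := hnonempty
    rw [mem_filter] at hmem
    have hsurj : Function.Surjective (fun k => lab (LC.vert x π k)) := by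
      intro t
      have ht : t ∈ univ.image (fun k => lab (LC.vert x π k)) := by
        rw [hmem.2]; exact mem_univ t
      rcases mem_image.1 ht with ⟨k, -, hk⟩
      exact ⟨k, hk⟩
    have hinj : Function.Injective (fun k => lab (LC.vert x π k)) :=
      Finite.injective_iff_surjective.2 hsurj
    refine ⟨fun k => color (LC.vert x π k), ?_, ?_⟩
    · intro k k' hkk
      dsimp only at hkk
      apply hinj
      show lab (LC.vert x π k) = lab (LC.vert x π k')
      rw [hlab]; dsimp only; rw [hkk]
    · refine ⟨pt (LC.vert x π 0), hptcube _ (fun i => LC.vert_le x π 0 i), ?_⟩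
      intro k
      refine ⟨pt (LC.vert x π k), hcolormem _ (fun i => LC.vert_le x π k i), ?_⟩
      rw [dist_pi_le_iff (by positivity)]
      intro i
      have hv0 : LC.vert x π 0 i = (x i : ℕ) := by
        unfold LC.vert
        rw [Fin.val_zero, if_neg (Nat.not_lt_zero _)]
        omega
      have hvk : (x i : ℕ) ≤ LC.vert x π k i ∧ LC.vert x π k i ≤ (x i : ℕ) + 1 := by
        unfold LC.vert
        constructor <;> split <;> omega
      show |(LC.vert x π 0 i : ℝ) / m - (LC.vert x π k i : ℝ) / m| ≤ 1 / (m:ℝ)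
      rw [div_sub_div_same, abs_div, abs_of_pos hmR]
      have habs : |(LC.vert x π 0 i : ℝ) - (LC.vert x π k i : ℝ)| ≤ 1 := by
        obtain ⟨h1, h2⟩ := hvk
        have h1' : ((x i : ℕ) : ℝ) ≤ (LC.vert x π k i : ℝ) := Nat.cast_le.2 h1
        have h2' : (LC.vert x π k i : ℝ) ≤ ((x i : ℕ) : ℝ) + 1 := by exact_mod_cast Nat.cast_le.2 h2
        have h0' : (LC.vert x π 0 i : ℝ) = ((x i : ℕ) : ℝ) := by exact_mod_cast congrArg (Nat.cast : ℕ → ℝ) hv0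
        rw [abs_le, h0']
        constructor <;> linarith
      exact div_le_div_of_nonneg_right habs hmR.le
  -- Limit argument: extract a point lying in `d+1` of the (closed) sets.
  choose F hFinj q hqcube wit using fun k : ℕ => main (k+1) (Nat.succ_pos k)
  obtain ⟨F0, hF0⟩ := Finite.exists_infinite_fiber F
  have hinf : {k : ℕ | F k = F0}.Infinite := by
    rw [← Set.infinite_coe_iff]
    exact hF0
  have hg : ∀ n : ℕ, ∃ kk, kk ∈ {k : ℕ | F k = F0} ∧ n < kk := by
    intro n
    obtain ⟨kk, h1, h2⟩ := hinf.exists_gt n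
    exact ⟨kk, h1, h2⟩
  choose g hgmem hggt using hg
  have hcomp : IsCompact (Set.Icc (0 : Fin d → ℝ) 1) := isCompact_Icc
  obtain ⟨p, hpcube, φ, hφmono, hφlim⟩ :=
    hcomp.tendsto_subseq (x := fun n => q (g n)) (fun n => hqcube (g n))
  refine ⟨p, hpcube, ?_⟩
  have hpC : ∀ j : Fin (d+1), p ∈ C (F0 j) := by
    intro j
    rw [← (hclosed (F0 j)).closure_eq]
    rw [Metric.mem_closure_iff]
    intro ε hε
    obtain ⟨n1, hn1⟩ := exists_nat_one_div_lt (half_pos hε)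
    obtain ⟨n2, hn2⟩ := (Metric.tendsto_atTop.1 hφlim) (ε/2) (half_pos hε)
    set n := max n1 n2 with hn
    have hd2 : dist (q (g (φ n))) p < ε/2 := hn2 n (le_max_right _ _)
    obtain ⟨z, hz, hzd⟩ := wit (g (φ n)) j
    have hFeq : F (g (φ n)) = F0 := hgmem (φ n)
    refine ⟨z, ?_, ?_⟩
    · rw [← hFeq]; exact hz
    · have h2 : (1 : ℝ) / ((g (φ n) : ℝ) + 1) ≤ 1 / ((n1 : ℝ) + 1) := by
        apply one_div_le_one_div_of_le
        · positivity
        · have ha : n ≤ φ n := hφmono.le_apply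
          have hb := hggt (φ n)
          have hc : n1 ≤ n := le_max_left _ _
          have : n1 ≤ g (φ n) := by omega
          exact_mod_cast Nat.succ_le_succ this
      have h1 : dist (q (g (φ n))) z ≤ 1 / ((g (φ n) : ℝ) + 1) := by
        have := hzd
        push_cast at this ⊢
        exact this
      calc dist p z ≤ dist p (q (g (φ n))) + dist (q (g (φ n))) z := dist_triangle _ _ _
        _ < ε/2 + ε/2 := by
            apply add_lt_add_of_lt_of_le
            · rw [dist_comm]; exact hd2
            · exact h1.trans (h2.trans hn1.le)
        _ = ε := add_halves ε
  have hsub : Set.range F0 ⊆ {n : Fin N | p ∈ C n} := by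
    rintro _ ⟨j, rfl⟩
    exact hpC j
  have hinjF0 : Function.Injective F0 := by
    have hFeq : F (g 0) = F0 := hgmem 0
    rw [← hFeq]
    exact hFinj (g 0)
  have hcard : (Set.range F0).encard = ((d+1 : ℕ) : ℕ∞) := by
    rw [← Set.image_univ, Set.InjOn.encard_image (hinjF0.injOn), Set.encard_univ]
    simp
  calc (d + 1 : ℕ∞) = ((d + 1 : ℕ) : ℕ∞) := by push_cast; rfl
    _ = (Set.range F0).encard := hcard.symm
    _ ≤ {n : Fin N | p ∈ C n}.encard := Set.encard_mono hsub
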